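/- Let H be a real Hilbert space, f : H → ℝ strongly quasiconvex with value γ > 0 with minimizer x*, let c > 0 and (c_k) a sequence of reals with c_k ≥ c for all k, and let (x^k) be a sequence in H with x^{k+1} ∈ Prox_{c_k f}(x^k) for all k ∈ ℕ. Then for every k ∈ ℕ and every λ ∈ (0,1]: (1/2)((1−λ)γc − λ)‖x^{k+1} − x*‖² ≤ ‖x^{k+1} − x^k‖ · ‖x^{k+1} − x*‖. -/

import Mathlib

/-!
Write `p = x^{k+1}`, `z = x^k` and test the proximal inequality at the point `(1 - t) p + t x*`.
Strong quasiconvexity, with the maximum attained at `p` because `x*` is a minimizer, lowers `f` there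
by `t (1 - t) (γ/2) ‖p - x*‖²`, while the quadratic penalty grows by
`(t² ‖p - x*‖² - 2 t ⟪p - z, p - x*⟫) / (2 c_k)`. Dividing by `t / (2 c_k)` and applying
Cauchy–Schwarz gives the estimate with `c_k`, and `c ≤ c_k` finishes.
-/

open Set RealInnerProductSpace

def IsStronglyQuasiconvex {H : Type*} [NormedAddCommGroup H] [InnerProductSpace ℝ H]
    (γ : ℝ) (f : H → ℝ) : Prop :=
  ∀ x y : H, ∀ t ∈ Icc (0 : ℝ) 1,
    f ((1 - t) • x + t • y) ≤ max (f x) (f y) - t * (1 - t) * (γ / 2) * ‖x - y‖ ^ 2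

/-- `p ∈ Prox_{C f}(z)`. -/
def IsProxPoint {H : Type*} [NormedAddCommGroup H] [InnerProductSpace ℝ H]
    (f : H → ℝ) (C : ℝ) (z p : H) : Prop :=
  ∀ y, f p + 1 / (2 * C) * ‖p - z‖ ^ 2 ≤ f y + 1 / (2 * C) * ‖y - z‖ ^ 2

section

variable {H : Type*} [NormedAddCommGroup H] [InnerProductSpace ℝ H]

theorem norm_one_sub_smul_add_smul_sub_sq (p q z : H) (t : ℝ) :
    ‖(1 - t) • p + t • q - z‖ ^ 2 =
      ‖p - z‖ ^ 2 - 2 * t * ⟪p - z, p - q⟫ + t ^ 2 * ‖p - q‖ ^ 2 := by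
  have h : (1 - t) • p + t • q - z = (p - z) - t • (p - q) := by
    simp only [sub_smul, one_smul, smul_sub]
    abel
  rw [h, norm_sub_sq_real, real_inner_smul_right, norm_smul, mul_pow, Real.norm_eq_abs, sq_abs]
  ring

namespace IsStronglyQuasiconvex

variable {γ : ℝ} {f : H → ℝ} {xs : H}

theorem apply_one_sub_smul_add_smul_le (hf : IsStronglyQuasiconvex γ f)
    (hxs : ∀ y, f xs ≤ f y) (x : H) {t : ℝ} (ht : t ∈ Icc (0 : ℝ) 1) :
    f ((1 - t) • x + t • xs) ≤ f x - t * (1 - t) * (γ / 2) * ‖x - xs‖ ^ 2 := by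
  simpa only [max_eq_left (hxs x)] using hf x xs t ht

variable {C : ℝ} {p z : H} {t : ℝ}

theorem mul_norm_sq_le_of_isProxPoint (hf : IsStronglyQuasiconvex γ f)
    (hxs : ∀ y, f xs ≤ f y) (hC : 0 < C) (hp : IsProxPoint f C z p) (ht : t ∈ Ioc (0 : ℝ) 1) :
    (1 - t) * γ * C * ‖p - xs‖ ^ 2 ≤ -2 * ⟪p - z, p - xs⟫ + t * ‖p - xs‖ ^ 2 := by
  have hprox := hp ((1 - t) • p + t • xs)
  rw [norm_one_sub_smul_add_smul_sub_sq] at hprox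
  have hdescent := hf.apply_one_sub_smul_add_smul_le hxs p (Ioc_subset_Icc_self ht)
  have h : t * (1 - t) * (γ / 2) * ‖p - xs‖ ^ 2 ≤
      1 / (2 * C) * (-2 * t * ⟪p - z, p - xs⟫ + t ^ 2 * ‖p - xs‖ ^ 2) := by
    linarith
  rw [one_div_mul_eq_div, le_div_iff₀ (by positivity)] at h
  have key : t * ((1 - t) * γ * C * ‖p - xs‖ ^ 2) ≤
      t * (-2 * ⟪p - z, p - xs⟫ + t * ‖p - xs‖ ^ 2) := by
    linarith
  exact le_of_mul_le_mul_left key ht.1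

theorem half_mul_norm_sq_le_of_isProxPoint (hf : IsStronglyQuasiconvex γ f)
    (hxs : ∀ y, f xs ≤ f y) (hC : 0 < C) (hp : IsProxPoint f C z p) (ht : t ∈ Ioc (0 : ℝ) 1) :
    1 / 2 * ((1 - t) * γ * C - t) * ‖p - xs‖ ^ 2 ≤ ‖p - z‖ * ‖p - xs‖ := by
  have h := hf.mul_norm_sq_le_of_isProxPoint hxs hC hp ht
  have hinner : -⟪p - z, p - xs⟫ ≤ ‖p - z‖ * ‖p - xs‖ :=
    (neg_le_abs _).trans (abs_real_inner_le_norm _ _)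
  linarith

end IsStronglyQuasiconvex

end

theorem ppa_key_estimate_general
    {H : Type*} [NormedAddCommGroup H] [InnerProductSpace ℝ H]
    (f : H → ℝ) (γ : ℝ) (hγ : 0 < γ)
    (hf : ∀ x y : H, ∀ t ∈ Set.Icc (0 : ℝ) 1,
      f ((1 - t) • x + t • y) ≤ max (f x) (f y) - t * (1 - t) * (γ / 2) * ‖x - y‖ ^ 2)
    (xs : H) (hxs : ∀ y : H, f xs ≤ f y)
    (c : ℝ) (hc : 0 < c) (ck : ℕ → ℝ) (hck : ∀ k, c ≤ ck k)
    (x : ℕ → H)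
    (hx : ∀ k : ℕ, ∀ y : H,
      f (x (k + 1)) + (1 / (2 * ck k)) * ‖x (k + 1) - x k‖ ^ 2
        ≤ f y + (1 / (2 * ck k)) * ‖y - x k‖ ^ 2) :
    ∀ k : ℕ, ∀ t ∈ Set.Ioc (0 : ℝ) 1,
      (1 / 2) * ((1 - t) * γ * c - t) * ‖x (k + 1) - xs‖ ^ 2
        ≤ ‖x (k + 1) - x k‖ * ‖x (k + 1) - xs‖ := by
  intro k t ht
  have h1t : 0 ≤ 1 - t := sub_nonneg.2 ht.2
  calc (1 / 2) * ((1 - t) * γ * c - t) * ‖x (k + 1) - xs‖ ^ 2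
      ≤ 1 / 2 * ((1 - t) * γ * ck k - t) * ‖x (k + 1) - xs‖ ^ 2 := by
        gcongr
        exact hck k
    _ ≤ ‖x (k + 1) - x k‖ * ‖x (k + 1) - xs‖ :=
        IsStronglyQuasiconvex.half_mul_norm_sq_le_of_isProxPoint hf hxs
          (hc.trans_le (hck k)) (hx k) ht

/-- Key estimate relating consecutive iterates of the proximal
point algorithm to the distance to the minimizer. -/
theorem ppa_key_estimate
    {H : Type*} [NormedAddCommGroup H] [InnerProductSpace ℝ H] [CompleteSpace H]
    (f : H → ℝ) (γ : ℝ) (hγ : 0 < γ)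
    (hf : ∀ x y : H, ∀ t ∈ Set.Icc (0 : ℝ) 1,
      f ((1 - t) • x + t • y) ≤ max (f x) (f y) - t * (1 - t) * (γ / 2) * ‖x - y‖ ^ 2)
    (xs : H) (hxs : ∀ y : H, f xs ≤ f y)
    (c : ℝ) (hc : 0 < c) (ck : ℕ → ℝ) (hck : ∀ k, c ≤ ck k)
    (x : ℕ → H)
    (hx : ∀ k : ℕ, ∀ y : H,
      f (x (k + 1)) + (1 / (2 * ck k)) * ‖x (k + 1) - x k‖ ^ 2
        ≤ f y + (1 / (2 * ck k)) * ‖y - x k‖ ^ 2) :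
    ∀ k : ℕ, ∀ t ∈ Set.Ioc (0 : ℝ) 1,
      (1 / 2) * ((1 - t) * γ * c - t) * ‖x (k + 1) - xs‖ ^ 2
        ≤ ‖x (k + 1) - x k‖ * ‖x (k + 1) - xs‖ :=
  ppa_key_estimate_general f γ hγ hf xs hxs c hc ck hck x hx
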